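/- arXiv:1007.4042 — 3 statements merged into one kernel-verified Lean document; each statement's English description precedes it below -/
import Mathlib

section
/- Let J : ℝ → ℝ be a positive C² function and U a symmetric-matrix-valued C¹ function with (d/dt) log J(t) = tr U(t) and (d/dt) tr U(t) + tr(U(t)²) + R(t) = 0 for a continuous function R. Then (d²/dt²) log J(t) + (1/n) ((d/dt) log J(t))² + R(t) ≤ 0 for all t. -/
/-! Along the geodesic `(log J)' = tr U`, so `(log J)'' + R = -tr(U²)` by the Riccati equation, and
the claim reduces to the Cauchy–Schwarz estimate `(tr U)² ≤ n · tr(U²)` for the symmetric matrix `U`. -/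

open Matrix

namespace Matrix

variable {ι : Type*} [Fintype ι]

lemma IsSymm.trace_mul_self_eq_sum_sq {U : Matrix ι ι ℝ} (hU : U.IsSymm) :
    trace (U * U) = ∑ i, ∑ j, U i j ^ 2 := by
  simp only [trace, diag, mul_apply, sq]
  refine Finset.sum_congr rfl fun i _ => Finset.sum_congr rfl fun j _ => ?_
  rw [hU.apply j i]

lemma IsSymm.trace_sq_le_card_mul_trace_mul_self {U : Matrix ι ι ℝ} (hU : U.IsSymm) :
    trace U ^ 2 ≤ Fintype.card ι * trace (U * U) :=
  calc trace U ^ 2 ≤ Fintype.card ι * ∑ i, U i i ^ 2 := sq_sum_le_card_mul_sum_sq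
    _ ≤ Fintype.card ι * ∑ i, ∑ j, U i j ^ 2 := by
      gcongr with i
      exact Finset.single_le_sum (f := fun j => U i j ^ 2) (fun j _ => sq_nonneg _)
        (Finset.mem_univ i)
    _ = Fintype.card ι * trace (U * U) := by rw [hU.trace_mul_self_eq_sum_sq]

lemma IsSymm.one_div_card_mul_trace_sq_le_trace_mul_self {U : Matrix ι ι ℝ} (hU : U.IsSymm) :
    1 / (Fintype.card ι : ℝ) * trace U ^ 2 ≤ trace (U * U) := by
  rcases (Nat.cast_nonneg (α := ℝ) (Fintype.card ι)).eq_or_lt with hcard | hcard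
  · rw [← hcard, div_zero, zero_mul, hU.trace_mul_self_eq_sum_sq]
    positivity
  · rw [one_div_mul_eq_div, div_le_iff₀ hcard, mul_comm]
    exact hU.trace_sq_le_card_mul_trace_mul_self

end Matrix

theorem stmt_1_general (n : ℕ) (J : ℝ → ℝ)
    (U : ℝ → Matrix (Fin n) (Fin n) ℝ) (hUsymm : ∀ t, (U t).IsSymm)
    (R : ℝ → ℝ)
    (hlog : ∀ t, deriv (fun s => Real.log (J s)) t = Matrix.trace (U t))
    (hric : ∀ t, deriv (fun s => Matrix.trace (U s)) t
        + Matrix.trace (U t * U t) + R t = 0) :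
    ∀ t, deriv (deriv (fun s => Real.log (J s))) t
        + (1 / (n : ℝ)) * (deriv (fun s => Real.log (J s)) t) ^ 2 + R t ≤ 0 := by
  intro t
  rw [funext hlog]
  have hcs := (hUsymm t).one_div_card_mul_trace_sq_le_trace_mul_self
  rw [Fintype.card_fin] at hcs
  linarith [hric t]

/-- If `(log J)' = tr U`, and `(tr U)' + tr(U²) + R = 0` with `U` symmetric,
then `(log J)'' + (1/n)((log J)')² + R ≤ 0`. -/
theorem stmt_1 (n : ℕ) (hn : 1 ≤ n) (J : ℝ → ℝ) (hJpos : ∀ t, 0 < J t)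
    (hJ : ContDiff ℝ 2 J)
    (U : ℝ → Matrix (Fin n) (Fin n) ℝ) (hUsymm : ∀ t, (U t).IsSymm)
    (R : ℝ → ℝ) (hR : Continuous R)
    (hlog : ∀ t, deriv (fun s => Real.log (J s)) t = Matrix.trace (U t))
    (hric : ∀ t, deriv (fun s => Matrix.trace (U s)) t
        + Matrix.trace (U t * U t) + R t = 0) :
    ∀ t, deriv (deriv (fun s => Real.log (J s))) t
        + (1 / (n : ℝ)) * (deriv (fun s => Real.log (J s)) t) ^ 2 + R t ≤ 0 :=
  stmt_1_general n J U hUsymm R hlog hric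
end

section
/- Let X be a metric space of diameter ≤ π and define the spherical suspension S(X) = X × [0,π]/∼ with metric cos d((x₁,a₁),(x₂,a₂)) = cos a₁ cos a₂ + sin a₁ sin a₂ cos d_X(x₁,x₂). Then this formula defines a metric on S(X): it is symmetric, vanishes exactly on the diagonal (after the quotient identification), and satisfies the triangle inequality. -/
/-!
Writing `a, b` for heights and `θ ≤ π` for the distance in `X`, the points of the unit sphere of `ℝ³`
with spherical coordinates `(a, 0)` and `(b, θ)` have inner product
`cos a cos b + sin a sin b cos θ`, so the suspension distance is the angle between them. Since this
angle is monotone in `θ`, the triangle inequality reduces, after replacing `d_X(x, z)` by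
`min (d_X(x, y) + d_X(y, z)) π`, to the triangle inequality for angles between vectors of `ℝ³`.
It vanishes exactly on the identified pairs because
`1 - cos d = (1 - cos (a - b)) + sin a sin b (1 - cos θ)` is a sum of two nonnegative terms.
-/
open Real InnerProductGeometry Set

noncomputable def suspensionDist (a b θ : ℝ) : ℝ :=
  arccos (cos a * cos b + sin a * sin b * cos θ)

lemma suspensionDist_comm (a b θ : ℝ) : suspensionDist a b θ = suspensionDist b a θ := by
  rw [suspensionDist, suspensionDist, mul_comm (cos a), mul_comm (sin a)]

lemma sin_mul_sin_nonneg {a b : ℝ} (ha : a ∈ Icc 0 π) (hb : b ∈ Icc 0 π) : 0 ≤ sin a * sin b :=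
  mul_nonneg (sin_nonneg_of_nonneg_of_le_pi ha.1 ha.2) (sin_nonneg_of_nonneg_of_le_pi hb.1 hb.2)

lemma suspensionDist_le_of_le {a b θ θ' : ℝ} (ha : a ∈ Icc 0 π) (hb : b ∈ Icc 0 π)
    (hθ : 0 ≤ θ) (hθ' : θ' ≤ π) (h : θ ≤ θ') : suspensionDist a b θ ≤ suspensionDist a b θ' :=
  arccos_le_arccos <| add_le_add_right
    (mul_le_mul_of_nonneg_left (cos_le_cos_of_nonneg_of_le_pi hθ hθ' h) (sin_mul_sin_nonneg ha hb)) _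

noncomputable def sphericalPoint (a φ : ℝ) : EuclideanSpace ℝ (Fin 3) :=
  WithLp.toLp 2 ![sin a * cos φ, sin a * sin φ, cos a]

lemma norm_sphericalPoint (a φ : ℝ) : ‖sphericalPoint a φ‖ = 1 := by
  rw [EuclideanSpace.norm_eq, sqrt_eq_one]
  simp only [Fin.sum_univ_three, sphericalPoint, Matrix.cons_val_zero, Matrix.cons_val_one,
    Matrix.cons_val_two, Matrix.head_cons, Matrix.tail_cons, Real.norm_eq_abs, sq_abs]
  linear_combination (sin a ^ 2) * sin_sq_add_cos_sq φ + sin_sq_add_cos_sq a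

lemma inner_sphericalPoint (a b φ ψ : ℝ) :
    inner ℝ (sphericalPoint a φ) (sphericalPoint b ψ) =
      cos a * cos b + sin a * sin b * cos (ψ - φ) := by
  simp only [sphericalPoint, PiLp.inner_apply, RCLike.inner_apply, conj_trivial,
    Fin.sum_univ_three, Matrix.cons_val_zero, Matrix.cons_val_one, Matrix.head_cons,
    Matrix.cons_val_two, Matrix.tail_cons, cos_sub]
  ring

lemma angle_sphericalPoint (a b φ ψ : ℝ) :
    angle (sphericalPoint a φ) (sphericalPoint b ψ) = suspensionDist a b (ψ - φ) := by
  rw [angle, inner_sphericalPoint, norm_sphericalPoint, norm_sphericalPoint, mul_one, div_one,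
    suspensionDist]

lemma suspensionDist_triangle {a b c θ s t : ℝ} (ha : a ∈ Icc 0 π) (hb : b ∈ Icc 0 π)
    (hc : c ∈ Icc 0 π) (hθ : θ ∈ Icc 0 π) (hs : s ∈ Icc 0 π) (ht : t ∈ Icc 0 π) (h : θ ≤ s + t) :
    suspensionDist a c θ ≤ suspensionDist a b s + suspensionDist b c t := by
  set φ := min (s + t) π
  have hφs : φ - s ≤ t := by
    rw [sub_le_iff_le_add']; exact min_le_left _ _
  have hsφ : s ≤ φ := le_min (le_add_of_nonneg_right ht.1) hs.2
  have hθφ : θ ≤ φ := le_min h hθ.2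
  calc suspensionDist a c θ
      ≤ suspensionDist a c (φ - 0) := suspensionDist_le_of_le ha hc hθ.1 (by simp [φ]) (by simpa)
    _ ≤ suspensionDist a b (s - 0) + suspensionDist b c (φ - s) := by
        simpa only [angle_sphericalPoint] using
          angle_le_angle_add_angle (sphericalPoint a 0) (sphericalPoint b s) (sphericalPoint c φ)
    _ ≤ suspensionDist a b s + suspensionDist b c t := by
        rw [sub_zero]
        gcongr
        exact suspensionDist_le_of_le hb hc (sub_nonneg.2 hsφ) ht.2 hφs

lemma sin_eq_zero_iff_of_mem_Icc {a : ℝ} (ha : a ∈ Icc 0 π) : sin a = 0 ↔ a = 0 ∨ a = π := by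
  refine ⟨fun h => ?_, by rintro (rfl | rfl) <;> simp⟩
  by_contra! hne
  exact (sin_pos_of_pos_of_lt_pi (ha.1.lt_of_ne' hne.1) (ha.2.lt_of_ne hne.2)).ne' h

lemma suspensionDist_eq_zero_iff {a b θ : ℝ} (ha : a ∈ Icc 0 π) (hb : b ∈ Icc 0 π)
    (hθ : θ ∈ Icc 0 π) : suspensionDist a b θ = 0 ↔ a = b ∧ (θ = 0 ∨ a = 0 ∨ a = π) := by
  have hπ := pi_pos
  have h₁ : 0 ≤ 1 - cos (a - b) := sub_nonneg.2 (cos_le_one _)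
  have h₂ : 0 ≤ sin a * sin b * (1 - cos θ) :=
    mul_nonneg (sin_mul_sin_nonneg ha hb) (sub_nonneg.2 (cos_le_one _))
  have key : cos a * cos b + sin a * sin b * cos θ =
      1 - ((1 - cos (a - b)) + sin a * sin b * (1 - cos θ)) := by
    rw [cos_sub]; ring
  rw [suspensionDist, arccos_eq_zero, key]
  constructor
  · intro h
    have hab : a = b := by
      rw [← sub_eq_zero, ← cos_eq_one_iff_of_lt_of_lt (by linarith [ha.1, hb.2])
        (by linarith [ha.2, hb.1])]
      linarith
    subst hab
    refine ⟨rfl, ?_⟩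
    rcases mul_eq_zero.1 (show sin a * sin a * (1 - cos θ) = 0 by linarith) with h | h
    · exact Or.inr ((sin_eq_zero_iff_of_mem_Icc ha).1 (mul_self_eq_zero.1 h))
    · exact Or.inl <| (cos_eq_one_iff_of_lt_of_lt (by linarith [hθ.1]) (by linarith [hθ.2])).1
        (by linarith)
  · rintro ⟨rfl, rfl | rfl | rfl⟩ <;> simp

/-- The spherical-suspension formula
`cos d((x₁,a₁),(x₂,a₂)) = cos a₁ cos a₂ + sin a₁ sin a₂ cos d_X(x₁,x₂)`
defines a metric on `X × [0,π]` after the quotient identification: it takes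
values in `[0,π]`, is symmetric, vanishes exactly when the two points are
identified in the suspension, and satisfies the triangle inequality. -/
theorem stmt_10 {X : Type*} [MetricSpace X]
    (hdiam : ∀ x y : X, dist x y ≤ Real.pi)
    (d : X × ℝ → X × ℝ → ℝ)
    (hd : d = fun p q => Real.arccos
      (Real.cos p.2 * Real.cos q.2 +
        Real.sin p.2 * Real.sin q.2 * Real.cos (dist p.1 q.1))) :
    ∀ p q r : X × ℝ,
      p.2 ∈ Set.Icc 0 Real.pi → q.2 ∈ Set.Icc 0 Real.pi → r.2 ∈ Set.Icc 0 Real.pi →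
      (d p q ∈ Set.Icc 0 Real.pi) ∧
      d p q = d q p ∧
      (d p q = 0 ↔ (p.2 = q.2 ∧ (p.1 = q.1 ∨ p.2 = 0 ∨ p.2 = Real.pi))) ∧
      d p r ≤ d p q + d q r := by
  have hd' : ∀ p q, d p q = suspensionDist p.2 q.2 (dist p.1 q.1) := by
    subst hd; exact fun _ _ => rfl
  have hdistX : ∀ x y : X, dist x y ∈ Icc 0 π := fun x y => ⟨dist_nonneg, hdiam x y⟩
  intro p q r hp hq hr
  simp only [hd']
  refine ⟨⟨arccos_nonneg _, arccos_le_pi _⟩, ?_, ?_, ?_⟩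
  · rw [suspensionDist_comm, dist_comm]
  · rw [suspensionDist_eq_zero_iff hp hq (hdistX _ _), dist_eq_zero]
  · exact suspensionDist_triangle hp hq hr (hdistX _ _) (hdistX _ _) (hdistX _ _)
      (dist_triangle _ _ _)
end

section
/- Let u : ℝ → ℝ with u(r) = r^{n-1}(1 - (R/6)r² + o(r²)) as r → 0⁺, where n ≥ 2 and R ∈ ℝ, and let k ∈ ℝ. If for all sufficiently small r > 0, u(r)/u(2r) ≥ (sin(√(k/(n-1)) r)/sin(2√(k/(n-1)) r))^{n-1} (with sinh in place of sin for k < 0, and the linear functions r and 2r for k = 0), then R ≥ k. -/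
open Filter Topology

lemma pt_congr {α : Type*} {f : α → ℝ} {l : Filter α} {a b : ℝ}
    (h : Tendsto f l (𝓝 a)) (hab : a = b) : Tendsto f l (𝓝 b) := hab ▸ h

lemma tendsto_cmul (a : ℝ) (ha : 0 < a) :
    Tendsto (fun r : ℝ => a * r) (𝓝[>] 0) (𝓝[>] 0) := by
  apply tendsto_nhdsWithin_of_tendsto_nhds_of_eventually_within
  · have : Tendsto (fun r : ℝ => a * r) (𝓝 0) (𝓝 (a * 0)) :=
      (continuous_const.mul continuous_id).tendsto 0
    simpa using this.mono_left nhdsWithin_le_nhds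
  · filter_upwards [self_mem_nhdsWithin] with r hr
    exact mul_pos ha hr

lemma rsq_tendsto : Tendsto (fun r : ℝ => r ^ 2) (𝓝[>] 0) (𝓝 0) := by
  have : Tendsto (fun r : ℝ => r ^ 2) (𝓝 0) (𝓝 (0 ^ 2)) :=
    (continuous_pow 2).tendsto 0
  simpa using this.mono_left nhdsWithin_le_nhds

lemma lin_from_quad {f : ℝ → ℝ} {L d : ℝ}
    (h : Tendsto (fun r => (f r - L) / r ^ 2) (𝓝[>] (0:ℝ)) (𝓝 d)) :
    Tendsto f (𝓝[>] (0:ℝ)) (𝓝 L) := by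
  have h0 : Tendsto (fun r => (f r - L) / r ^ 2 * r ^ 2 + L) (𝓝[>] (0:ℝ)) (𝓝 (d * 0 + L)) :=
    (h.mul rsq_tendsto).add_const L
  rw [mul_zero, zero_add] at h0
  refine h0.congr' ?_
  filter_upwards [self_mem_nhdsWithin] with r hr
  have hr0 : r ≠ 0 := ne_of_gt hr
  field_simp
  ring

lemma lemA (f : ℝ → ℝ) (L d : ℝ) (hL : L ≠ 0)
    (h1 : Tendsto (fun r => (f r - L) / r ^ 2) (𝓝[>] (0:ℝ)) (𝓝 d)) :
    Tendsto (fun r => (f r / f (2 * r) - 1) / r ^ 2) (𝓝[>] (0:ℝ)) (𝓝 (-3 * d / L)) := by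
  have h2' : Tendsto (fun r => (f (2 * r) - L) / (2 * r) ^ 2) (𝓝[>] (0:ℝ)) (𝓝 d) :=
    h1.comp (tendsto_cmul 2 two_pos)
  have h2 : Tendsto (fun r => (f (2 * r) - L) / r ^ 2) (𝓝[>] (0:ℝ)) (𝓝 (4 * d)) := by
    refine pt_congr ((h2'.const_mul 4).congr' ?_) (by ring)
    filter_upwards [self_mem_nhdsWithin] with r hr
    have hr0 : r ≠ 0 := ne_of_gt hr
    field_simp
    ring
  have hf2 : Tendsto (fun r => f (2 * r)) (𝓝[>] (0:ℝ)) (𝓝 L) := lin_from_quad h2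
  have hne : ∀ᶠ r in 𝓝[>] (0:ℝ), f (2 * r) ≠ 0 := hf2.eventually_ne hL
  have main : Tendsto (fun r => ((f r - L) / r ^ 2 - (f (2 * r) - L) / r ^ 2) / f (2 * r))
      (𝓝[>] (0:ℝ)) (𝓝 ((d - 4 * d) / L)) := (h1.sub h2).div hf2 hL
  refine pt_congr (main.congr' ?_) (by ring)
  filter_upwards [self_mem_nhdsWithin, hne] with r hr hne
  have hr0 : r ≠ 0 := ne_of_gt hr
  rw [div_sub_one hne]
  ring

lemma lemB (x : ℝ → ℝ) (L : ℝ) (m : ℕ)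
    (h : Tendsto (fun r => (x r - 1) / r ^ 2) (𝓝[>] (0:ℝ)) (𝓝 L)) :
    Tendsto (fun r => (x r ^ m - 1) / r ^ 2) (𝓝[>] (0:ℝ)) (𝓝 (m * L)) := by
  have hx : Tendsto x (𝓝[>] (0:ℝ)) (𝓝 1) := lin_from_quad h
  have hsum : Tendsto (fun r => ∑ i ∈ Finset.range m, x r ^ i) (𝓝[>] (0:ℝ)) (𝓝 m) := by
    have := tendsto_finset_sum (Finset.range m) (fun i (_ : i ∈ Finset.range m) => hx.pow i)
    simpa using this
  refine pt_congr ((h.mul hsum).congr ?_) (by ring)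
  intro r
  rw [div_mul_eq_mul_div, mul_comm, geom_sum_mul]

lemma sin_div_self : Tendsto (fun x : ℝ => Real.sin x / x) (𝓝[>] (0:ℝ)) (𝓝 1) := by
  have h := (Real.hasDerivAt_sin 0).tendsto_slope_zero_right
  rw [Real.cos_zero] at h
  refine h.congr fun x => ?_
  simp [Real.sin_zero, smul_eq_mul, div_eq_inv_mul]

lemma sinh_div_self : Tendsto (fun x : ℝ => Real.sinh x / x) (𝓝[>] (0:ℝ)) (𝓝 1) := by
  have h := (Real.hasDerivAt_sinh 0).tendsto_slope_zero_right
  rw [Real.cosh_zero] at h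
  refine h.congr fun x => ?_
  simp [Real.sinh_zero, smul_eq_mul, div_eq_inv_mul]

lemma cubed_aux (s c : ℝ → ℝ) (e : ℝ)
    (hder : ∀ x : ℝ, HasDerivAt s (c x) x)
    (hder2 : ∀ x : ℝ, HasDerivAt c (e * s x) x)
    (hs0 : s 0 = 0) (hc0 : c 0 = 1) (hscont : Continuous s) (hccont : Continuous c)
    (hsd : Tendsto (fun x : ℝ => s x / x) (𝓝[>] (0:ℝ)) (𝓝 1)) :
    Tendsto (fun x : ℝ => (s x - x) / x ^ 3) (𝓝[>] (0:ℝ)) (𝓝 (e / 6)) := by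
  have step3 : Tendsto (fun x : ℝ => e * s x / (6 * x)) (𝓝[>] (0:ℝ)) (𝓝 (e / 6)) := by
    refine pt_congr ((hsd.const_mul (e / 6)).congr' ?_) (by ring)
    filter_upwards [self_mem_nhdsWithin] with x hx
    have hx0 : x ≠ 0 := ne_of_gt hx
    field_simp
    try ring
  have step2 : Tendsto (fun x : ℝ => (c x - 1) / (3 * x ^ 2)) (𝓝[>] (0:ℝ)) (𝓝 (e / 6)) := by
    apply HasDerivAt.lhopital_zero_nhdsGT
      (f' := fun x => e * s x) (g' := fun x => 6 * x)
    · filter_upwards with x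
      simpa using (hder2 x).sub_const 1
    · filter_upwards with x
      have h := HasDerivAt.const_mul (3:ℝ) (hasDerivAt_pow 2 x)
      exact h.congr_deriv (by push_cast; ring)
    · filter_upwards [self_mem_nhdsWithin] with x hx
      have hx' : (0:ℝ) < x := hx
      positivity
    · have : Tendsto (fun x : ℝ => c x - 1) (𝓝 0) (𝓝 (c 0 - 1)) :=
        (hccont.sub continuous_const).tendsto 0
      rw [hc0, sub_self] at this
      exact this.mono_left nhdsWithin_le_nhds
    · have : Tendsto (fun x : ℝ => 3 * x ^ 2) (𝓝 0) (𝓝 (3 * 0 ^ 2)) :=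
        (continuous_const.mul (continuous_pow 2)).tendsto 0
      simpa using this.mono_left nhdsWithin_le_nhds
    · exact step3
  apply HasDerivAt.lhopital_zero_nhdsGT
    (f' := fun x => c x - 1) (g' := fun x => 3 * x ^ 2)
  · filter_upwards with x
    exact (hder x).sub (hasDerivAt_id' x)
  · filter_upwards with x
    have h := hasDerivAt_pow 3 x
    exact h.congr_deriv (by push_cast; ring)
  · filter_upwards [self_mem_nhdsWithin] with x hx
    have hx' : (0:ℝ) < x := hx
    positivity
  · have : Tendsto (fun x : ℝ => s x - x) (𝓝 0) (𝓝 (s 0 - 0)) :=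
      (hscont.sub continuous_id).tendsto 0
    rw [hs0, sub_zero] at this
    exact this.mono_left nhdsWithin_le_nhds
  · have : Tendsto (fun x : ℝ => x ^ 3) (𝓝 0) (𝓝 ((0:ℝ) ^ 3)) :=
      (continuous_pow 3).tendsto 0
    simpa using this.mono_left nhdsWithin_le_nhds
  · exact step2

lemma sin_cubed : Tendsto (fun x : ℝ => (Real.sin x - x) / x ^ 3) (𝓝[>] (0:ℝ)) (𝓝 (-1 / 6)) := by
  have := cubed_aux Real.sin Real.cos (-1) Real.hasDerivAt_sin
    (fun x => by simpa using Real.hasDerivAt_cos x) Real.sin_zero Real.cos_zero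
    Real.continuous_sin Real.continuous_cos sin_div_self
  simpa using this

lemma sinh_cubed : Tendsto (fun x : ℝ => (Real.sinh x - x) / x ^ 3) (𝓝[>] (0:ℝ)) (𝓝 (1 / 6)) := by
  have := cubed_aux Real.sinh Real.cosh 1 Real.hasDerivAt_sinh
    (fun x => by simpa using Real.hasDerivAt_cosh x) Real.sinh_zero Real.cosh_zero
    Real.continuous_sinh Real.continuous_cosh sinh_div_self
  simpa using this

lemma trig_case (a : ℝ) (ha : 0 < a) (s : ℝ → ℝ) (e : ℝ)
    (hcubed : Tendsto (fun x : ℝ => (s x - x) / x ^ 3) (𝓝[>] (0:ℝ)) (𝓝 (e / 6))) :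
    Tendsto (fun r => ((s (a * r) / r) / (s (a * (2 * r)) / (2 * r)) - 1) / r ^ 2)
      (𝓝[>] (0:ℝ)) (𝓝 (-(e * a ^ 2) / 2)) := by
  have h0 : Tendsto (fun r : ℝ => (s (a * r) - a * r) / (a * r) ^ 3) (𝓝[>] (0:ℝ)) (𝓝 (e / 6)) :=
    hcubed.comp (tendsto_cmul a ha)
  have h1 : Tendsto (fun r : ℝ => (s (a * r) / r - a) / r ^ 2) (𝓝[>] (0:ℝ))
      (𝓝 (a ^ 3 * (e / 6))) := by
    refine (h0.const_mul (a ^ 3)).congr' ?_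
    filter_upwards [self_mem_nhdsWithin] with r hr
    have hr0 : r ≠ 0 := ne_of_gt hr
    have ha0 : a ≠ 0 := ne_of_gt ha
    field_simp
  have := lemA (fun r => s (a * r) / r) a (a ^ 3 * (e / 6)) (ne_of_gt ha) h1
  refine pt_congr this ?_
  have ha0 : a ≠ 0 := ne_of_gt ha
  field_simp
  ring

/-- If `u(r) = r^{n-1}(1 - (R/6) r² + o(r²))` as `r → 0⁺` and for all small
`r > 0` the comparison ratio inequality
`u(r)/u(2r) ≥ (s_k(r)/s_k(2r))^{n-1}` holds, where `s_k` is `sin`, linear, or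
`sinh` according to the sign of `k`, then `R ≥ k`. -/
theorem stmt_13 (n : ℕ) (hn : 2 ≤ n) (k R : ℝ) (u : ℝ → ℝ)
    (hupos : ∀ r ∈ Set.Ioo (0 : ℝ) 1, 0 < u r)
    (hexp : (fun r => u r - r ^ (n - 1) * (1 - R / 6 * r ^ 2))
      =o[𝓝[>] (0 : ℝ)] fun r => r ^ (n + 1))
    (sk : ℝ → ℝ)
    (hsk : sk = fun r =>
      if 0 < k then Real.sin (Real.sqrt (k / (n - 1)) * r)
      else if k = 0 then r
      else Real.sinh (Real.sqrt (-k / (n - 1)) * r))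
    (hratio : ∀ᶠ r in 𝓝[>] (0 : ℝ),
      (sk r / sk (2 * r)) ^ (n - 1) ≤ u r / u (2 * r)) :
    k ≤ R := by
  obtain ⟨p, rfl⟩ : ∃ p, n = p + 2 := ⟨n - 2, by omega⟩
  have hp1 : ((p:ℝ) + 2) - 1 = (p:ℝ) + 1 := by ring
  have hcast : ((p + 2 : ℕ) : ℝ) - 1 = (p : ℝ) + 1 := by push_cast; ring
  have hpm : (p + 2) - 1 = p + 1 := rfl
  -- Step 1: expansion of u r / r^(p+1)
  have h_u : Tendsto (fun r => (u r / r ^ (p + 1) - 1) / r ^ 2) (𝓝[>] (0:ℝ)) (𝓝 (-(R / 6))) := by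
    have he := hexp.tendsto_div_nhds_zero
    have := he.sub_const (R / 6)
    refine pt_congr (this.congr' ?_) (by ring)
    filter_upwards [self_mem_nhdsWithin] with r hr
    have hr0 : r ≠ 0 := ne_of_gt hr
    rw [hpm]
    field_simp
    ring
  -- Step 2: limit of the u-ratio
  have hFu : Tendsto (fun r => ((u r / r ^ (p + 1)) / (u (2 * r) / (2 * r) ^ (p + 1)) - 1) / r ^ 2)
      (𝓝[>] (0:ℝ)) (𝓝 (R / 2)) := by
    have := lemA (fun r => u r / r ^ (p + 1)) 1 (-(R / 6)) one_ne_zero h_u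
    exact pt_congr this (by ring)
  -- Step 3: limit of the sk-ratio
  have hFsk : Tendsto (fun r => ((sk r / r / (sk (2 * r) / (2 * r))) ^ (p + 1) - 1) / r ^ 2)
      (𝓝[>] (0:ℝ)) (𝓝 (k / 2)) := by
    rcases lt_trichotomy 0 k with hk | hk | hk
    · -- k > 0
      set a := Real.sqrt (k / (((p + 2 : ℕ) : ℝ) - 1)) with hadef
      have hq : 0 < k / (((p + 2 : ℕ) : ℝ) - 1) := by
        rw [hcast]; positivity
      have ha : 0 < a := Real.sqrt_pos.mpr hq
      have ha2 : a ^ 2 = k / ((p : ℝ) + 1) := by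
        rw [hadef, Real.sq_sqrt (le_of_lt hq), hcast]
      have hQ := trig_case a ha Real.sin (-1) (by
        have := sin_cubed; refine pt_congr this (by norm_num))
      have hB := lemB _ _ (p + 1) hQ
      refine pt_congr (hB.congr fun r => ?_) ?_
      · rw [hsk]
        simp only [if_pos hk, ← hadef]
      · rw [ha2]
        have hp0 : ((p : ℝ) + 1) ≠ 0 := by positivity
        push_cast
        field_simp
    · -- k = 0
      subst hk
      have : ∀ᶠ r in 𝓝[>] (0:ℝ),
          (0:ℝ) = ((sk r / r / (sk (2 * r) / (2 * r))) ^ (p + 1) - 1) / r ^ 2 := by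
        have hsk0 : sk = fun r : ℝ => r := by rw [hsk]; norm_num
        filter_upwards [self_mem_nhdsWithin] with r hr
        have hr0 : r ≠ 0 := ne_of_gt hr
        have h2r0 : (2 * r) ≠ 0 := by positivity
        rw [hsk0]
        rw [div_self hr0, div_self h2r0, div_one, one_pow, sub_self, zero_div]
      refine pt_congr (tendsto_const_nhds.congr' this) (by norm_num)
    · -- k < 0
      set a := Real.sqrt (-k / (((p + 2 : ℕ) : ℝ) - 1)) with hadef
      have hq : 0 < -k / (((p + 2 : ℕ) : ℝ) - 1) := by
        rw [hcast]
        have : 0 < -k := by linarith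
        positivity
      have ha : 0 < a := Real.sqrt_pos.mpr hq
      have ha2 : a ^ 2 = -k / ((p : ℝ) + 1) := by
        rw [hadef, Real.sq_sqrt (le_of_lt hq), hcast]
      have hQ := trig_case a ha Real.sinh 1 (by
        have := sinh_cubed; refine pt_congr this (by norm_num))
      have hB := lemB _ _ (p + 1) hQ
      refine pt_congr (hB.congr fun r => ?_) ?_
      · rw [hsk]
        have hk' : ¬ (0 < k) := by linarith
        have hk0 : ¬ (k = 0) := by linarith
        simp only [if_neg hk', if_neg hk0, ← hadef]
      · rw [ha2]
        have hp0 : ((p : ℝ) + 1) ≠ 0 := by positivity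
        push_cast
        field_simp
  -- Step 4: eventual inequality between the two ratio functions
  have hev : ∀ᶠ r in 𝓝[>] (0:ℝ),
      ((sk r / r / (sk (2 * r) / (2 * r))) ^ (p + 1) - 1) / r ^ 2 ≤
      ((u r / r ^ (p + 1)) / (u (2 * r) / (2 * r) ^ (p + 1)) - 1) / r ^ 2 := by
    have hsmall : Set.Ioo (0:ℝ) (1/2) ∈ 𝓝[>] (0:ℝ) :=
      Ioo_mem_nhdsGT_of_mem (by norm_num)
    filter_upwards [hratio, hsmall] with r hrat hr
    obtain ⟨hr0, hr2⟩ := hr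
    have hrne : r ≠ 0 := ne_of_gt hr0
    have hu1 : 0 < u r := hupos r ⟨hr0, by linarith⟩
    have hu2 : 0 < u (2 * r) := hupos (2 * r) ⟨by linarith, by linarith⟩
    rw [hpm] at hrat
    have c1 : sk r / r / (sk (2 * r) / (2 * r)) = 2 * (sk r / sk (2 * r)) := by
      rw [div_div_div_comm]
      rw [show r / (2 * r) = 1 / 2 by rw [mul_comm 2 r, div_mul_eq_div_div, div_self hrne]]
      rw [div_div_eq_mul_div, div_one, mul_comm]
    have c2 : (u r / r ^ (p + 1)) / (u (2 * r) / (2 * r) ^ (p + 1)) =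
        2 ^ (p + 1) * (u r / u (2 * r)) := by
      rw [div_div_div_comm]
      rw [show r ^ (p + 1) / (2 * r) ^ (p + 1) = (1 / 2) ^ (p + 1) by
        rw [← div_pow]; congr 1; rw [mul_comm 2 r, div_mul_eq_div_div, div_self hrne]]
      rw [div_pow, one_pow, div_div_eq_mul_div, div_one]
      ring
    rw [c1, c2, mul_pow]
    have hmono : (2:ℝ) ^ (p + 1) * (sk r / sk (2 * r)) ^ (p + 1) ≤
        2 ^ (p + 1) * (u r / u (2 * r)) :=
      mul_le_mul_of_nonneg_left hrat (by positivity)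
    have hr2pos : (0:ℝ) < r ^ 2 := by positivity
    exact div_le_div_of_nonneg_right (sub_le_sub_right hmono 1) hr2pos.le
  have hkey : k / 2 ≤ R / 2 := le_of_tendsto_of_tendsto hFsk hFu hev
  linarith
end
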